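/- arXiv:1806.05903 — 5 statements merged into one kernel-verified Lean document; each statement's English description precedes it below -/
import Mathlib

section
/- For every positive integer m and every k with 1 ≤ m < k, the identity (1 − σ_m σ_{m−1} ⋯ σ_2 σ_1) · S_{1,m} = S_{1,m−1} · (1 − σ_m σ_{m−1} ⋯ σ_2 σ_1^2) holds in the monoid ring Z[B_k] of the braid monoid B_k. -/
/-- `sigmaDesc σ t = σ_t σ_{t-1} ⋯ σ_2 σ_1` (and `1` for `t = 0`). -/
def sigmaDesc {M : Type*} [Monoid M] (σ : ℕ → M) : ℕ → M
  | 0 => 1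
  | (t + 1) => σ (t + 1) * sigmaDesc σ t

/-- The shuffle element `S_{1,m} = 1 + σ_1 + σ_2σ_1 + ⋯ + σ_m σ_{m−1} ⋯ σ_1`
in the monoid ring `ℤ[M]`. -/
noncomputable def Sshuffle {M : Type*} [Monoid M] (σ : ℕ → M) (m : ℕ) :
    MonoidAlgebra ℤ M :=
  ∑ t ∈ Finset.range (m + 1), MonoidAlgebra.of ℤ M (sigmaDesc σ t)

lemma commD {M : Type*} [Monoid M] (σ : ℕ → M) (k : ℕ)
    (hcomm : ∀ i j, 1 ≤ i → 1 ≤ j → i + 2 ≤ j → j < k → σ i * σ j = σ j * σ i) :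
    ∀ t j, t + 2 ≤ j → j < k → σ j * sigmaDesc σ t = sigmaDesc σ t * σ j := by
  intro t
  induction t with
  | zero => intro j _ _; simp [sigmaDesc]
  | succ n ih =>
    intro j hj hjk
    show σ j * (σ (n+1) * sigmaDesc σ n) = (σ (n+1) * sigmaDesc σ n) * σ j
    rw [← mul_assoc, ← hcomm (n+1) j (by omega) (by omega) (by omega) hjk,
        mul_assoc, ih j (by omega) hjk, mul_assoc]

lemma keyD {M : Type*} [Monoid M] (σ : ℕ → M) (k : ℕ)
    (hcomm : ∀ i j, 1 ≤ i → 1 ≤ j → i + 2 ≤ j → j < k → σ i * σ j = σ j * σ i)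
    (hbraid : ∀ i, 1 ≤ i → i + 1 < k → σ i * σ (i + 1) * σ i = σ (i + 1) * σ i * σ (i + 1)) :
    ∀ m i, 1 ≤ i → i + 1 ≤ m → m < k →
      sigmaDesc σ m * σ (i + 1) = σ i * sigmaDesc σ m := by
  intro m
  induction m with
  | zero => intro i _ h _; omega
  | succ n ih =>
    intro i hi him hmk
    rcases eq_or_lt_of_le him with heq | hlt
    · -- i + 1 = n + 1
      obtain ⟨j, rfl⟩ : ∃ j, i = j + 1 := ⟨i - 1, by omega⟩
      have hn : n = j + 1 := by omega
      subst hn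
      have hc : σ (j+2) * sigmaDesc σ j = sigmaDesc σ j * σ (j+2) :=
        commD σ k hcomm j (j+2) (by omega) hmk
      have hb : σ (j+1) * σ (j+2) * σ (j+1) = σ (j+2) * σ (j+1) * σ (j+2) :=
        hbraid (j+1) (by omega) hmk
      show σ (j+2) * (σ (j+1) * sigmaDesc σ j) * σ (j+2)
          = σ (j+1) * (σ (j+2) * (σ (j+1) * sigmaDesc σ j))
      calc σ (j+2) * (σ (j+1) * sigmaDesc σ j) * σ (j+2)
          = σ (j+2) * σ (j+1) * (sigmaDesc σ j * σ (j+2)) := by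
            rw [← mul_assoc, mul_assoc _ _ (σ (j+2))]
        _ = σ (j+2) * σ (j+1) * σ (j+2) * sigmaDesc σ j := by
            rw [← hc, ← mul_assoc]
        _ = σ (j+1) * σ (j+2) * σ (j+1) * sigmaDesc σ j := by rw [← hb]
        _ = σ (j+1) * (σ (j+2) * (σ (j+1) * sigmaDesc σ j)) := by
            rw [mul_assoc, mul_assoc]
    · -- i + 1 < n + 1, so i + 1 ≤ n
      show σ (n+1) * sigmaDesc σ n * σ (i+1) = σ i * (σ (n+1) * sigmaDesc σ n)
      rw [mul_assoc, ih i hi (by omega) (by omega), ← mul_assoc,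
        ← hcomm i (n+1) hi (by omega) (by omega) hmk, mul_assoc]

lemma keyDD {M : Type*} [Monoid M] (σ : ℕ → M) (k : ℕ)
    (hcomm : ∀ i j, 1 ≤ i → 1 ≤ j → i + 2 ≤ j → j < k → σ i * σ j = σ j * σ i)
    (hbraid : ∀ i, 1 ≤ i → i + 1 < k → σ i * σ (i + 1) * σ i = σ (i + 1) * σ i * σ (i + 1)) :
    ∀ t m, t + 1 ≤ m → m < k →
      sigmaDesc σ m * sigmaDesc σ (t + 1) = sigmaDesc σ t * (sigmaDesc σ m * σ 1) := by
  intro t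
  induction t with
  | zero =>
    intro m _ _
    show sigmaDesc σ m * (σ 1 * sigmaDesc σ 0) = sigmaDesc σ 0 * (sigmaDesc σ m * σ 1)
    simp [sigmaDesc]
  | succ n ih =>
    intro m hm hmk
    show sigmaDesc σ m * (σ (n+2) * sigmaDesc σ (n+1))
        = σ (n+1) * sigmaDesc σ n * (sigmaDesc σ m * σ 1)
    rw [← mul_assoc, keyD σ k hcomm hbraid m (n+1) (by omega) (by omega) hmk,
      mul_assoc, ih m (by omega) hmk, ← mul_assoc, ← mul_assoc]

/-- In the monoid ring `ℤ[B_k]` of the braid monoid `B_k` (formalized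
universally: for any monoid with elements `σ_1, …, σ_{k−1}` satisfying the braid
relations), for `1 ≤ m < k` one has
`(1 − σ_m ⋯ σ_2 σ_1) S_{1,m} = S_{1,m−1} (1 − σ_m ⋯ σ_2 σ_1²)`. -/
theorem stmt3 {M : Type*} [Monoid M] (σ : ℕ → M) (k m : ℕ)
    (hcomm : ∀ i j, 1 ≤ i → 1 ≤ j → i + 2 ≤ j → j < k → σ i * σ j = σ j * σ i)
    (hbraid : ∀ i, 1 ≤ i → i + 1 < k → σ i * σ (i + 1) * σ i = σ (i + 1) * σ i * σ (i + 1))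
    (hm : 1 ≤ m) (hmk : m < k) :
    (1 - MonoidAlgebra.of ℤ M (sigmaDesc σ m)) * Sshuffle σ m
      = Sshuffle σ (m - 1) * (1 - MonoidAlgebra.of ℤ M (sigmaDesc σ m * σ 1)) := by
  obtain ⟨n, rfl⟩ : ∃ n, m = n + 1 := ⟨m - 1, by omega⟩
  simp only [Nat.add_sub_cancel]
  have hexp : (MonoidAlgebra.of ℤ M (sigmaDesc σ (n+1))) * Sshuffle σ (n+1)
      = MonoidAlgebra.of ℤ M (sigmaDesc σ (n+1))
        + Sshuffle σ n * MonoidAlgebra.of ℤ M (sigmaDesc σ (n+1) * σ 1) := by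
    unfold Sshuffle
    rw [Finset.mul_sum, Finset.sum_range_succ', Finset.sum_mul, add_comm]
    congr 1
    · show MonoidAlgebra.of ℤ M (sigmaDesc σ (n+1)) * MonoidAlgebra.of ℤ M 1 = _
      rw [map_one, mul_one]
    · apply Finset.sum_congr rfl
      intro t ht
      rw [Finset.mem_range] at ht
      rw [← map_mul, keyDD σ k hcomm hbraid t (n+1) (by omega) hmk, map_mul]
  have hsplit : Sshuffle σ (n+1) = Sshuffle σ n + MonoidAlgebra.of ℤ M (sigmaDesc σ (n+1)) := by
    unfold Sshuffle
    rw [Finset.sum_range_succ]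
  rw [sub_mul, one_mul, hexp, mul_sub, mul_one, hsplit]
  abel
end

section
/- Let m, l ∈ N_0^n with |l| ≥ 2, and suppose there exist 1 ≤ i < j ≤ n with m_i ≠ 0 and m_j ≠ 0. If the systems of equations m_i(m_i−1)/N(m) = l_i(l_i−1)/N(l), m_j(m_j−1)/N(m) = l_j(l_j−1)/N(l), and m_i m_j / N(m) = l_i l_j / N(l) hold (equivalently Q_m = Q_l as monomials), then m = l. -/
/-- `N(m) = gcd{m_i(m_i−1), m_j m_k : 1 ≤ i,j,k ≤ n, j < k}`. -/
def Nnum {n : ℕ} (m : Fin n → ℕ) : ℕ :=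
  Finset.gcd (Finset.univ ×ˢ Finset.univ)
    (fun p : Fin n × Fin n =>
      if p.1 = p.2 then m p.1 * (m p.1 - 1) else m p.1 * m p.2)

/-- The monomial `Q_m = Π_i p_{ii}^{m_i(m_i−1)/N(m)} · Π_{i<j} (p_{ij}p_{ji})^{m_i m_j/N(m)}`
in `ℤ[p_{ij} : 1 ≤ i,j ≤ n]`. -/
noncomputable def Qmono {n : ℕ} (m : Fin n → ℕ) : MvPolynomial (Fin n × Fin n) ℤ :=
  ∏ p ∈ Finset.univ ×ˢ Finset.univ,
    MvPolynomial.X p ^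
      (if p.1 = p.2 then m p.1 * (m p.1 - 1) / Nnum m else m p.1 * m p.2 / Nnum m)

/-! For `m : Fin n → ℕ` let `F_m(k, r) = m_k m_r − δ_{kr} m_k` (`pairCount m`) be the numerators
of the exponents of `Q_m`. Equal monomials give `N(l) F_m = N(m) F_l` entrywise. The rows of `F_m` sum to
`m_k (|m| − 1)`, so `N(l) (|m| − 1) m = N(m) (|l| − 1) l`. Summing over `k` gives
`N(l) |m| (|m| − 1) = N(m) |l| (|l| − 1)`, while multiplying the relations at `i` and `j` and
dividing by the `(i, j)` entry gives `N(l) (|m| − 1)² = N(m) (|l| − 1)²`. These two force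
`|m| = |l|` and `N(m) = N(l)`, hence `m = l`. Here `N(l) ≠ 0` because the `(i, j)` exponent of
`Q_m` is positive. -/

theorem MvPolynomial.eq_of_prod_X_pow_eq {σ R : Type*} [CommSemiring R] [Nontrivial R]
    {t : Finset σ} {x y : σ → ℕ}
    (h : ∏ s ∈ t, (X s : MvPolynomial σ R) ^ x s = ∏ s ∈ t, X s ^ y s) {s : σ} (hs : s ∈ t) :
    x s = y s := by
  classical
  rw [prod_X_pow, prod_X_pow] at h
  simpa [Finsupp.indicator_of_mem hs] using
    DFunLike.congr_fun (monomial_left_injective one_ne_zero h) s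

theorem eq_and_eq_of_mul_sq_eq_of_mul_mul_add_one_eq {R : Type*} [CommRing R] [IsDomain R]
    {a b x y : R} (ha : a ≠ 0) (hb : b ≠ 0) (hx : x ≠ 0)
    (hsq : b * x ^ 2 = a * y ^ 2) (hsucc : b * x * (x + 1) = a * y * (y + 1)) :
    x = y ∧ b = a := by
  have hlin : b * x = a * y := by linear_combination hsucc - hsq
  have hy : y ≠ 0 := by
    rintro rfl
    simp_all
  have hxy : x = y := by
    have : a * y * (x - y) = 0 := by linear_combination hsq - x * hlin
    simpa [ha, hy, sub_eq_zero] using this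
  subst hxy
  exact ⟨rfl, mul_right_cancel₀ hx hlin⟩

section

variable {n : ℕ}

def pairCount (m : Fin n → ℕ) (p : Fin n × Fin n) : ℕ :=
  if p.1 = p.2 then m p.1 * (m p.1 - 1) else m p.1 * m p.2

variable (m l : Fin n → ℕ)

theorem pairCount_of_ne {k r : Fin n} (h : k ≠ r) : pairCount m (k, r) = m k * m r := if_neg h

theorem pairCount_add_ite (k r : Fin n) :
    pairCount m (k, r) + (if k = r then m k else 0) = m k * m r := by
  by_cases h : k = r
  · subst h
    simp [pairCount, Nat.mul_sub_one, Nat.sub_add_cancel (Nat.le_mul_self _)]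
  · simp [pairCount_of_ne m h, h]

theorem sum_pairCount_add (k : Fin n) :
    ∑ r, pairCount m (k, r) + m k = m k * ∑ r, m r := by
  simpa [Finset.sum_add_distrib, Finset.mul_sum] using
    Finset.sum_congr rfl fun r (_ : r ∈ Finset.univ) => pairCount_add_ite m k r

theorem Nnum_dvd_pairCount (p : Fin n × Fin n) : Nnum m ∣ pairCount m p :=
  Finset.gcd_dvd (Finset.mem_product.2 ⟨Finset.mem_univ _, Finset.mem_univ _⟩)

theorem Nnum_ne_zero_of_pairCount_ne_zero {p : Fin n × Fin n} (h : pairCount m p ≠ 0) :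
    Nnum m ≠ 0 :=
  fun h0 => h (Nat.eq_zero_of_zero_dvd (h0 ▸ Nnum_dvd_pairCount m p))

theorem Qmono_eq_prod :
    Qmono m = ∏ p ∈ Finset.univ ×ˢ Finset.univ, MvPolynomial.X p ^ (pairCount m p / Nnum m) := by
  unfold Qmono pairCount
  simp only [apply_ite (· / Nnum m)]

theorem pairCount_div_Nnum_eq_of_Qmono_eq (hQ : Qmono m = Qmono l) (p : Fin n × Fin n) :
    pairCount m p / Nnum m = pairCount l p / Nnum l := by
  rw [Qmono_eq_prod, Qmono_eq_prod] at hQ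
  exact MvPolynomial.eq_of_prod_X_pow_eq hQ (by simp)

theorem Nnum_mul_pairCount_eq_of_Qmono_eq (hQ : Qmono m = Qmono l) (p : Fin n × Fin n) :
    Nnum l * pairCount m p = Nnum m * pairCount l p := by
  have hexp := pairCount_div_Nnum_eq_of_Qmono_eq m l hQ p
  calc Nnum l * pairCount m p = Nnum l * (pairCount m p / Nnum m * Nnum m) := by
        rw [Nat.div_mul_cancel (Nnum_dvd_pairCount m p)]
    _ = Nnum m * (pairCount l p / Nnum l * Nnum l) := by rw [hexp]; ring
    _ = Nnum m * pairCount l p := by rw [Nat.div_mul_cancel (Nnum_dvd_pairCount l p)]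

variable {m l}

theorem mul_sum_sub_one_mul_eq_of_mul_pairCount_eq {a b : ℕ}
    (h : ∀ p, b * pairCount m p = a * pairCount l p) (k : Fin n) :
    (b : ℤ) * (∑ r, (m r : ℤ) - 1) * m k = a * (∑ r, (l r : ℤ) - 1) * l k := by
  have hrow : b * ∑ r, pairCount m (k, r) = a * ∑ r, pairCount l (k, r) := by
    simp only [Finset.mul_sum, h]
  have hm := sum_pairCount_add m k
  have hl := sum_pairCount_add l k
  zify at hrow hm hl
  linear_combination hrow - b * hm + a * hl

theorem eq_of_mul_pairCount_eq {a b : ℕ} (ha : a ≠ 0) (hb : b ≠ 0)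
    (h : ∀ p, b * pairCount m p = a * pairCount l p) {i j : Fin n} (hij : i ≠ j)
    (hmi : m i ≠ 0) (hmj : m j ≠ 0) : m = l := by
  set S := ∑ r, (m r : ℤ)
  set T := ∑ r, (l r : ℤ)
  have hrow := mul_sum_sub_one_mul_eq_of_mul_pairCount_eq h
  have hoff : (b : ℤ) * (m i * m j) = a * (l i * l j) := by
    have := h (i, j)
    rw [pairCount_of_ne m hij, pairCount_of_ne l hij] at this
    exact_mod_cast this
  have hsum : (b : ℤ) * (S - 1) * S = a * (T - 1) * T := by
    simp only [S, T, Finset.mul_sum, hrow]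
  have hsq : (b : ℤ) * (S - 1) ^ 2 * (b * (m i * m j)) = a * (T - 1) ^ 2 * (b * (m i * m j)) := by
    linear_combination (b * (S - 1) * m i) * hrow j + (a * (T - 1) * l j) * hrow i
      - a * (T - 1) ^ 2 * hoff
  have hS : (2 : ℤ) ≤ S := by
    have := Finset.add_le_sum (f := fun r => (m r : ℤ)) (fun r _ => by positivity)
      (Finset.mem_univ i) (Finset.mem_univ j) hij
    omega
  obtain ⟨hST, hab⟩ := eq_and_eq_of_mul_sq_eq_of_mul_mul_add_one_eq (x := S - 1) (y := T - 1)
    (by exact_mod_cast ha) (by exact_mod_cast hb) (by omega)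
    (mul_right_cancel₀ (by positivity) hsq) (by linear_combination hsum)
  funext k
  have := hrow k
  rw [hST, hab] at this
  exact_mod_cast mul_left_cancel₀ (mul_ne_zero (by exact_mod_cast ha) (by omega)) this

end

theorem stmt7_general {n : ℕ} (m l : Fin n → ℕ)
    (i j : Fin n) (hij : i < j) (hmi : m i ≠ 0) (hmj : m j ≠ 0)
    (hQ : Qmono m = Qmono l) :
    m = l := by
  have hpos : 0 < pairCount m (i, j) := by
    rw [pairCount_of_ne m hij.ne]
    positivity
  have hNm : Nnum m ≠ 0 := Nnum_ne_zero_of_pairCount_ne_zero m hpos.ne'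
  have hNl : Nnum l ≠ 0 := by
    have hexp := pairCount_div_Nnum_eq_of_Qmono_eq m l hQ (i, j)
    intro h0
    rw [h0, Nat.div_zero] at hexp
    exact (Nat.div_pos (Nat.le_of_dvd hpos (Nnum_dvd_pairCount m _))
      (Nat.pos_of_ne_zero hNm)).ne' hexp
  exact eq_of_mul_pairCount_eq hNm hNl (Nnum_mul_pairCount_eq_of_Qmono_eq m l hQ) hij.ne hmi hmj

/-- Let `m, l ∈ ℕ_0^n` with `|l| ≥ 2` and suppose there are `i < j` with
`m_i ≠ 0 ≠ m_j`. If `Q_m = Q_l` as monomials (equivalently, the systems of equations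
`m_i(m_i−1)/N(m) = l_i(l_i−1)/N(l)`, `m_j(m_j−1)/N(m) = l_j(l_j−1)/N(l)` and
`m_i m_j/N(m) = l_i l_j/N(l)` hold), then `m = l`. -/
theorem stmt7 {n : ℕ} (m l : Fin n → ℕ) (hl : 2 ≤ ∑ i, l i)
    (i j : Fin n) (hij : i < j) (hmi : m i ≠ 0) (hmj : m j ≠ 0)
    (hQ : Qmono m = Qmono l) :
    m = l :=
  stmt7_general m l i j hij hmi hmj hQ
end

section
/- Under the Z-action on words of degree m given by 1 · (i_1 i_2 ⋯ i_m) = i_1 i_3 i_4 ⋯ i_m i_2 (fixing the first letter and cyclically rotating the rest), every orbit contains a unique word of the form j v^k where j is a letter, v is a Lyndon word, and k ≥ 1; moreover k divides m_j − 1 and k divides m_t for all t ≠ j. -/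
/-- The degree of a word: the number of occurrences of each letter. -/
def degreeW {n : ℕ} (w : List (Fin n)) : Fin n → ℕ := fun i => w.count i

/-- A nonempty word `w` is Lyndon if `w <_lex v` for every factorization `w = uv`
into nonempty words. -/
def IsLyndon {n : ℕ} (w : List (Fin n)) : Prop :=
  w ≠ [] ∧ ∀ u v : List (Fin n), w = u ++ v → u ≠ [] → v ≠ [] →
    List.Lex (· < ·) w v

/-- A nonempty word `w` is a necklace if `w ≤_lex vu` for every factorization `w = uv`
into nonempty words. -/
def IsNecklace {n : ℕ} (w : List (Fin n)) : Prop :=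
  w ≠ [] ∧ ∀ u v : List (Fin n), w = u ++ v → u ≠ [] → v ≠ [] →
    ¬ List.Lex (· < ·) (v ++ u) w

/-- `ℓ_m`, the number of Lyndon words of degree `m`. -/
noncomputable def lyndonCount {n : ℕ} (m : Fin n → ℕ) : ℕ :=
  Nat.card {w : List (Fin n) // degreeW w = m ∧ IsLyndon w}

/-- `N_m`, the number of necklaces of degree `m`. -/
noncomputable def necklaceCount {n : ℕ} (m : Fin n → ℕ) : ℕ :=
  Nat.card {w : List (Fin n) // degreeW w = m ∧ IsNecklace w}

/-- Cyclic rotation: `i_1 i_2 ⋯ i_m ↦ i_2 ⋯ i_m i_1`. -/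
def rotateW {n : ℕ} : List (Fin n) → List (Fin n)
  | [] => []
  | a :: t => t ++ [a]

/-- The action fixing the first letter and cyclically rotating the rest:
`i_1 i_2 i_3 ⋯ i_m ↦ i_1 i_3 ⋯ i_m i_2`. -/
def rot2W {n : ℕ} : List (Fin n) → List (Fin n)
  | [] => []
  | a :: t => a :: rotateW t

/-- `v^k`: the `k`-fold concatenation of the word `v`. -/
def powW {n : ℕ} (v : List (Fin n)) (k : ℕ) : List (Fin n) :=
  (List.replicate k v).flatten

/-!
Write `w = j l`. The action only rotates `l`, so the orbit of `w` consists of the words `j l'`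
with `l'` a rotation of `l`. The lexicographically least rotation `s` of `l` is a necklace.
Merging adjacent increasing factors of its factorization into letters yields a non-increasing
factorization of `s` into Lyndon words, and minimality of `s` among its rotations forces all
factors to coincide, so `s = v^k` with `v` Lyndon. A power `v^k` is strictly smaller than its
rotations by non-multiples of `|v|`: any word `j v'^k'` in the orbit has `v'^k' = s`, and then
`|v| = |v'|`, so `(v', k') = (v, k)`. The divisibilities come from counting letters in `l ~ v^k`.
-/

namespace List

variable {α : Type*} [LinearOrder α]

theorem append_lt_append_left_iff (p : List α) {a b : List α} : p ++ a < p ++ b ↔ a < b :=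
  StrictMono.lt_iff_lt (f := (p ++ ·)) fun _ _ => List.append_left_lt

theorem append_lt_append_of_lt_of_not_prefix {a b : List α} (h : a < b) (hp : ¬ a <+: b)
    (u w : List α) : a ++ u < b ++ w := by
  induction h with
  | nil => exact absurd List.nil_prefix hp
  | rel hab => exact List.Lex.rel hab
  | cons _ ih => exact List.Lex.cons (ih fun hpre => hp (List.cons_prefix_cons.2 ⟨rfl, hpre⟩))

theorem exists_isLeast_isRotated (l : List α) : ∃ s, IsLeast {s' | l ~r s'} s := by
  have hne : l.cyclicPermutations.toFinset.Nonempty :=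
    ⟨l, List.mem_toFinset.2 (List.mem_cyclicPermutations_self l)⟩
  have hset : (l.cyclicPermutations.toFinset : Set (List α)) = {s' | l ~r s'} := by
    ext s'
    simp [List.mem_cyclicPermutations_iff, List.isRotated_comm]
  exact ⟨_, hset ▸ Finset.isLeast_min' _ hne⟩

end List

section Lyndon

variable {n : ℕ}

theorem isLyndon_singleton (a : Fin n) : IsLyndon [a] := by
  refine ⟨List.cons_ne_nil a [], fun u v h hu hv => ?_⟩
  have := congrArg List.length h
  simp only [List.length_singleton, List.length_append] at this
  have := List.length_pos_iff.2 hu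
  have := List.length_pos_iff.2 hv
  omega

theorem IsLyndon.lt_of_eq_append {w u v : List (Fin n)} (hw : IsLyndon w) (h : w = u ++ v)
    (hu : u ≠ []) (hv : v ≠ []) : w < v :=
  hw.2 u v h hu hv

theorem IsLyndon.append_append_lt {x y : List (Fin n)} (hy : IsLyndon y) (hx : x ≠ [])
    (h : x < y) (A B : List (Fin n)) : x ++ (y ++ A) < y ++ B := by
  by_cases hpre : x <+: y
  · obtain ⟨t, rfl⟩ := hpre
    have ht : t ≠ [] := by rintro rfl; simp at h
    have hyt : x ++ t < t := hy.lt_of_eq_append rfl hx ht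
    have hnp : ¬ x ++ t <+: t := fun hp => by
      have := hp.length_le
      have := List.length_pos_iff.2 hx
      simp only [List.length_append] at *
      omega
    simpa only [List.append_assoc, List.append_lt_append_left_iff] using
      List.append_lt_append_of_lt_of_not_prefix hyt hnp A B
  · exact List.append_lt_append_of_lt_of_not_prefix h hpre (y ++ A) B

theorem IsLyndon.append {x y : List (Fin n)} (hx : IsLyndon x) (hy : IsLyndon y) (h : x < y) :
    IsLyndon (x ++ y) := by
  refine ⟨by simp [hx.1], fun u v huv hu hv => ?_⟩
  have hxy : x ++ y < y := by simpa using hy.append_append_lt hx.1 h [] []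
  rcases List.append_eq_append_iff.1 huv.symm with ⟨x', rfl, rfl⟩ | ⟨y', rfl, rfl⟩
  · by_cases hx' : x' = []
    · subst hx'
      simpa using hxy
    · have hnp : ¬ u ++ x' <+: x' := fun hp => by
        have := hp.length_le
        have := List.length_pos_iff.2 hu
        simp only [List.length_append] at *
        omega
      exact List.append_lt_append_of_lt_of_not_prefix (hx.lt_of_eq_append rfl hu hx') hnp y y
  · by_cases hy' : y' = []
    · subst hy'
      simpa using hxy
    · exact hxy.trans (hy.lt_of_eq_append rfl hy' hv)

theorem powW_succ (v : List (Fin n)) (k : ℕ) : powW v (k + 1) = v ++ powW v k := by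
  simp [powW, List.replicate_succ]

theorem powW_succ' (v : List (Fin n)) (k : ℕ) : powW v (k + 1) = powW v k ++ v := by
  simp [powW, List.replicate_succ']

theorem length_powW (v : List (Fin n)) (k : ℕ) : (powW v k).length = k * v.length := by
  simp [powW, List.sum_replicate]

theorem count_powW (v : List (Fin n)) (k : ℕ) (x : Fin n) :
    (powW v k).count x = k * v.count x := by
  simp [powW, List.count_flatten, List.sum_replicate]

theorem take_length_powW {v : List (Fin n)} {k : ℕ} (hk : 0 < k) :
    (powW v k).take v.length = v := by
  obtain ⟨k, rfl⟩ := Nat.exists_eq_add_of_le' hk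
  rw [powW_succ, List.take_left]

theorem rotate_length_powW (v : List (Fin n)) (k : ℕ) :
    (powW v k).rotate v.length = powW v k := by
  cases k with
  | zero => simp [powW]
  | succ k => rw [powW_succ, List.rotate_append_length_eq, ← powW_succ', powW_succ]

theorem rotate_mod_length_powW (v : List (Fin n)) (k i : ℕ) :
    (powW v k).rotate (i % v.length) = (powW v k).rotate i := by
  have hmul : ∀ q, (powW v k).rotate (v.length * q) = powW v k := by
    intro q
    induction q with
    | zero => simp
    | succ q ih => rw [Nat.mul_succ, ← List.rotate_rotate, ih, rotate_length_powW]
  conv_rhs => rw [← Nat.div_add_mod i v.length, ← List.rotate_rotate, hmul]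

theorem IsLyndon.powW_lt_rotate {v : List (Fin n)} (hv : IsLyndon v) {k : ℕ} (hk : 0 < k)
    {i : ℕ} (hi : i % v.length ≠ 0) : powW v k < (powW v k).rotate i := by
  rw [← rotate_mod_length_powW]
  set b := i % v.length
  have hb : b < v.length := Nat.mod_lt _ (List.length_pos_iff.2 hv.1)
  obtain ⟨k, rfl⟩ := Nat.exists_eq_add_of_le' hk
  rw [powW_succ, List.rotate_eq_drop_append_take (by simp; omega),
    List.drop_append_of_le_length hb.le, List.take_append_of_le_length hb.le]
  have hlt : v < v.drop b := hv.lt_of_eq_append (List.take_append_drop b v).symm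
    (by simp [List.take_eq_nil_iff, hi, hv.1]) (by simp [List.drop_eq_nil_iff, hb])
  have hnp : ¬ v <+: v.drop b := fun hp => by
    have := hp.length_le
    simp only [List.length_drop] at this
    omega
  simpa only [List.append_assoc] using
    List.append_lt_append_of_lt_of_not_prefix hlt hnp (powW v k) (powW v k ++ v.take b)

theorem IsLyndon.powW_le_of_isRotated {v l : List (Fin n)} (hv : IsLyndon v) {k : ℕ}
    (hk : 0 < k) (h : powW v k ~r l) : powW v k ≤ l := by
  obtain ⟨i, rfl⟩ := h
  by_cases hi : i % v.length = 0
  · rw [← rotate_mod_length_powW, hi, List.rotate_zero]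
  · exact (hv.powW_lt_rotate hk hi).le

theorem IsLyndon.length_dvd_of_rotate_powW_eq {v : List (Fin n)} (hv : IsLyndon v) {k i : ℕ}
    (hk : 0 < k) (h : (powW v k).rotate i = powW v k) : v.length ∣ i :=
  Nat.dvd_of_mod_eq_zero <| by_contra fun hi => (hv.powW_lt_rotate hk hi).ne' h

theorem IsLyndon.eq_of_powW_eq {v v' : List (Fin n)} (hv : IsLyndon v) (hv' : IsLyndon v')
    {k k' : ℕ} (hk : 0 < k) (hk' : 0 < k') (h : powW v k = powW v' k') : v = v' ∧ k = k' := by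
  have hlen : v.length = v'.length := Nat.dvd_antisymm
    (hv.length_dvd_of_rotate_powW_eq hk (by rw [h, rotate_length_powW]))
    (hv'.length_dvd_of_rotate_powW_eq hk' (by rw [← h, rotate_length_powW]))
  obtain rfl : v = v' := calc
    v = (powW v k).take v.length := (take_length_powW hk).symm
    _ = (powW v' k').take v'.length := by rw [h, hlen]
    _ = v' := take_length_powW hk'
  refine ⟨rfl, Nat.eq_of_mul_eq_mul_right (List.length_pos_iff.2 hv.1) ?_⟩
  simpa only [length_powW] using congrArg List.length h

def IsLyndonFactorization (M : List (List (Fin n))) : Prop :=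
  (∀ l ∈ M, IsLyndon l) ∧ M.Pairwise (· ≥ ·)

theorem IsLyndon.exists_lyndonFactorization_append {a : List (Fin n)} (ha : IsLyndon a)
    {M : List (List (Fin n))} (hM : IsLyndonFactorization M) :
    ∃ M', IsLyndonFactorization M' ∧ M'.flatten = a ++ M.flatten := by
  induction M generalizing a with
  | nil => exact ⟨[a], ⟨by simpa using ha, List.pairwise_singleton _ _⟩, by simp⟩
  | cons b M ih =>
    obtain ⟨hly, hsorted⟩ := hM
    obtain ⟨hb_ge, hsorted⟩ := List.pairwise_cons.1 hsorted
    have hb : IsLyndon b := hly b List.mem_cons_self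
    by_cases hba : b ≤ a
    · refine ⟨a :: b :: M, ⟨?_, ?_⟩, rfl⟩
      · simpa [ha] using hly
      · refine List.pairwise_cons.2 ⟨?_, List.pairwise_cons.2 ⟨hb_ge, hsorted⟩⟩
        simpa [hba] using fun c hc => (hb_ge c hc).trans hba
    · obtain ⟨M', hM', hflat⟩ := ih (ha.append hb (not_le.1 hba))
        ⟨fun l hl => hly l (List.mem_cons_of_mem b hl), hsorted⟩
      exact ⟨M', hM', by simp [hflat]⟩

theorem exists_lyndonFactorization (s : List (Fin n)) :
    ∃ M, IsLyndonFactorization M ∧ M.flatten = s := by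
  induction s with
  | nil => exact ⟨[], ⟨by simp, List.Pairwise.nil⟩, rfl⟩
  | cons a s ih =>
    obtain ⟨M, hM, rfl⟩ := ih
    exact (isLyndon_singleton a).exists_lyndonFactorization_append hM

theorem IsNecklace.exists_eq_powW {s : List (Fin n)} (hs : IsNecklace s) :
    ∃ v k, IsLyndon v ∧ 0 < k ∧ s = powW v k := by
  obtain ⟨M, ⟨hly, hsorted⟩, rfl⟩ := exists_lyndonFactorization s
  obtain ⟨v, M₁, rfl⟩ := List.exists_cons_of_ne_nil
    (show M ≠ [] from fun h => hs.1 (by simp [h]))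
  have hv : IsLyndon v := hly v List.mem_cons_self
  suffices hall : ∀ l ∈ M₁, l = v by
    refine ⟨v, M₁.length + 1, hv, M₁.length.succ_pos, ?_⟩
    rw [List.eq_replicate_of_mem hall, powW_succ, List.length_replicate]
    rfl
  obtain ⟨hv_ge, hsorted₁⟩ := List.pairwise_cons.1 hsorted
  obtain rfl | ⟨M₂, x, rfl⟩ := M₁.eq_nil_or_concat'
  · simp
  have hx : IsLyndon x := hly x (by simp)
  -- a last factor `x < v` would make the rotation `x v ⋯` smaller than `s = v ⋯ x`
  have hxv : x = v := by
    refine le_antisymm (hv_ge x (by simp)) (not_lt.1 fun hlt => ?_)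
    refine hs.2 (v ++ M₂.flatten) x (by simp) (by simp [hv.1]) hx.1 ?_
    simpa using hv.append_append_lt hx.1 hlt M₂.flatten (M₂.flatten ++ x)
  obtain ⟨-, -, hx_le⟩ := List.pairwise_append.1 hsorted₁
  intro l hl
  rcases List.mem_append.1 hl with hl | hl
  · exact le_antisymm (hv_ge l (by simp [hl])) (hxv ▸ hx_le l hl x (by simp))
  · simpa [hxv] using hl

theorem isNecklace_of_isLeast_isRotated {l s : List (Fin n)} (hl : l ≠ [])
    (hs : IsLeast {s' | l ~r s'} s) : IsNecklace s := by
  refine ⟨fun h => hl (List.isRotated_nil_iff.1 (h ▸ hs.1)), fun u x h _ _ hlt => ?_⟩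
  have hrot : l ~r x ++ u := hs.1.trans (h ▸ List.isRotated_append)
  exact not_lt_of_ge (hs.2 hrot) hlt

theorem rot2W_iterate (a : Fin n) (l : List (Fin n)) (t : ℕ) :
    rot2W^[t] (a :: l) = a :: l.rotate t := by
  induction t generalizing l with
  | zero => simp
  | succ t ih =>
    have hrot : rotateW l = l.rotate 1 := by cases l <;> simp [rotateW]
    rw [Function.iterate_succ_apply, rot2W, hrot, ih, List.rotate_rotate, Nat.add_comm 1 t]

end Lyndon

/-- Under the ℤ-action fixing the first letter and cyclically rotating the
rest, the orbit of any word `w` of length `≥ 2` contains a unique word of the form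
`j v^k` with `j` a letter, `v` Lyndon and `k ≥ 1`; moreover `k` divides `m_j − 1` and
`k` divides `m_t` for every letter `t ≠ j`, where `m` is the degree of `w`. -/
theorem stmt14 {n : ℕ} (w : List (Fin n)) (hw : 2 ≤ w.length) :
    ∃! p : Fin n × List (Fin n) × ℕ, IsLyndon p.2.1 ∧ 1 ≤ p.2.2 ∧
      (∃ t : ℕ, rot2W^[t] w = p.1 :: powW p.2.1 p.2.2) ∧
      p.2.2 ∣ (degreeW w p.1 - 1) ∧
      (∀ s : Fin n, s ≠ p.1 → p.2.2 ∣ degreeW w s) := by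
  obtain ⟨j, l, rfl⟩ := List.exists_cons_of_length_pos (by omega : 0 < w.length)
  have hl : l ≠ [] := List.ne_nil_of_length_pos (by simp at hw; omega)
  obtain ⟨s, hs⟩ := l.exists_isLeast_isRotated
  obtain ⟨v, k, hv, hk, rfl⟩ := (isNecklace_of_isLeast_isRotated hl hs).exists_eq_powW
  obtain ⟨t, ht⟩ := hs.1
  have hcount : ∀ x, l.count x = k * v.count x := fun x => by
    rw [← (l.rotate_perm t).count_eq, ht, count_powW]
  refine ⟨(j, v, k), ⟨hv, hk, ⟨t, by rw [rot2W_iterate, ht]⟩, ?_, fun x hx => ?_⟩, ?_⟩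
  · simp [degreeW, hcount]
  · simp [degreeW, hx.symm, hcount]
  · rintro ⟨j', v', k'⟩ ⟨hv', hk', ⟨t', ht'⟩, -, -⟩
    rw [rot2W_iterate, List.cons.injEq] at ht'
    have hrot : powW v' k' ~r powW v k := (List.IsRotated.symm ⟨t', ht'.2⟩).trans ⟨t, ht⟩
    have heq : powW v' k' = powW v k :=
      le_antisymm (hv'.powW_le_of_isRotated hk' hrot) (hs.2 ⟨t', ht'.2⟩)
    obtain ⟨rfl, rfl⟩ := hv'.eq_of_powW_eq hv hk' hk heq
    rw [ht'.1]
end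

section
/- Let A be the l×l matrix over a commutative ring with a_{tt} = 1 for all t, a_{t+1,t} = −λ_t for 1 ≤ t ≤ l−1, a_{1,l} = −λ_l, and all other entries 0. Then det(A) = 1 − λ_1 λ_2 ⋯ λ_l. Moreover, if the ring is a field, A has corank 0 or 1, and corank 1 if and only if λ_1 λ_2 ⋯ λ_l = 1. -/
/-!
Off the diagonal, `cyclicA lam` has nonzero entries only at `(t + 1, t)`, so in the Leibniz
expansion of the determinant only the identity and the `l`-cycle `t ↦ t + 1` contribute, giving
`1 + sign(cycle) * ∏ (-λ_t) = 1 - ∏ λ_t` (for `l = 1` the cycle is the identity, so this case is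
separate). A kernel vector satisfies `x (t + 1) = λ_t * x t`, hence is determined by `x 0`: the
corank is at most `1`, and it is `1` exactly when the determinant vanishes.
-/

/-- The `l × l` matrix with `1` on the diagonal, `−λ_t` in position `(t+1, t)` for
`1 ≤ t ≤ l−1`, `−λ_l` in position `(1, l)`, and `0` elsewhere. -/
def cyclicA {l : ℕ} {R : Type*} [CommRing R] (lam : Fin l → R) :
    Matrix (Fin l) (Fin l) R :=
  fun s t => (if s = t then 1 else 0) - (if (s : ℕ) = ((t : ℕ) + 1) % l then lam t else 0)

open Finset Equiv Matrix

section CyclicA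

variable {l : ℕ} {R : Type*} [CommRing R]

lemma cyclicA_apply [NeZero l] (lam : Fin l → R) (s t : Fin l) :
    cyclicA lam s t = (if s = t then 1 else 0) - (if s = t + 1 then lam t else 0) := by
  simp only [cyclicA, Fin.ext_iff, Fin.val_add, Fin.val_one', Nat.add_mod_mod]

lemma cyclicA_apply_self {n : ℕ} (lam : Fin (n + 2) → R) (i : Fin (n + 2)) :
    cyclicA lam i i = 1 := by
  simp [cyclicA_apply]

lemma cyclicA_apply_add_one {n : ℕ} (lam : Fin (n + 2) → R) (i : Fin (n + 2)) :
    cyclicA lam (i + 1) i = -lam i := by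
  simp [cyclicA_apply]

lemma cyclicA_apply_of_ne [NeZero l] (lam : Fin l → R) {s t : Fin l} (h₀ : s ≠ t)
    (h₁ : s ≠ t + 1) : cyclicA lam s t = 0 := by
  simp [cyclicA_apply, h₀, h₁]

lemma cyclicA_mulVec_apply [NeZero l] (lam : Fin l → R) (x : Fin l → R) (s : Fin l) :
    (cyclicA lam *ᵥ x) s = x s - lam (s - 1) * x (s - 1) := by
  have h (t : Fin l) : s = t + 1 ↔ t = s - 1 := by rw [eq_sub_iff_add_eq, eq_comm]
  simp [mulVec, dotProduct, cyclicA_apply, sub_mul, ite_mul, sum_sub_distrib, h]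

lemma cyclicA_mulVec_eq_zero_iff [NeZero l] (lam : Fin l → R) (x : Fin l → R) :
    cyclicA lam *ᵥ x = 0 ↔ ∀ t, x (t + 1) = lam t * x t := by
  simp only [funext_iff, cyclicA_mulVec_apply, Pi.zero_apply, sub_eq_zero]
  exact ⟨fun h t => by simpa using h (t + 1), fun h s => by simpa using h (s - 1)⟩

end CyclicA

open Fin.CommRing in
lemma Fin.eq_zero_of_apply_add_one_eq_mul {l : ℕ} [NeZero l] {M : Type*} [MulZeroClass M]
    {lam x : Fin l → M} (hx : ∀ t, x (t + 1) = lam t * x t) (h₀ : x 0 = 0) : x = 0 := by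
  have key (k : ℕ) : x k = 0 := by
    induction k with
    | zero => simpa using h₀
    | succ k ih => rw [Nat.cast_succ, hx, ih, mul_zero]
  funext j
  simpa using key j

open Fin.CommRing in
lemma Equiv.Perm.eq_one_or_finRotate {n : ℕ} (σ : Perm (Fin (n + 2)))
    (h : ∀ i, σ i = i ∨ σ i = i + 1) : σ = 1 ∨ σ = finRotate (n + 2) := by
  refine or_iff_not_imp_left.2 fun hσ => ?_
  obtain ⟨i₀, hi₀⟩ : ∃ i, σ i ≠ i := not_forall.1 fun h' => hσ (Equiv.ext h')
  have shift (k : ℕ) : σ (i₀ + k) = i₀ + k + 1 := by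
    induction k with
    | zero => simpa using (h i₀).resolve_left hi₀
    | succ k ih =>
      rw [Nat.cast_succ, ← add_assoc]
      refine (h _).resolve_left fun hfix => ?_
      have : i₀ + k + 1 = i₀ + k := σ.injective (hfix.trans ih.symm)
      simp at this
  ext1 j
  simpa [finRotate_apply] using shift (j - i₀).val

section Det

variable {R : Type*} [CommRing R]

lemma det_cyclicA_fin_add_two {n : ℕ} (lam : Fin (n + 2) → R) :
    (cyclicA lam).det = 1 - ∏ t, lam t := by
  have hne : (1 : Perm (Fin (n + 2))) ≠ finRotate (n + 2) := fun h => by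
    simpa [Fin.ext_iff] using congr($h 0)
  rw [det_apply, sum_eq_add_of_mem 1 _ (mem_univ _) (mem_univ _) hne]
  · have hrot : Perm.sign (finRotate (n + 2)) • ∏ i, cyclicA lam (finRotate (n + 2) i) i
        = -∏ t, lam t := by
      simp only [finRotate_apply, cyclicA_apply_add_one, prod_neg, sign_finRotate, card_univ,
        Fintype.card_fin, Units.smul_def, zsmul_eq_mul]
      push_cast
      rw [← mul_assoc, ← pow_add, (show Odd (n + 1 + (n + 2)) from ⟨n + 1, by ring⟩).neg_one_pow,
        neg_one_mul]
    simp only [map_one, Perm.one_apply, cyclicA_apply_self, prod_const_one, one_smul, hrot,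
      sub_eq_add_neg]
  · intro σ _ hσ
    obtain ⟨i, hi₀, hi₁⟩ : ∃ i, σ i ≠ i ∧ σ i ≠ i + 1 := by
      by_contra! h
      exact (σ.eq_one_or_finRotate fun i => or_iff_not_imp_left.2 (h i)).elim hσ.1 hσ.2
    rw [prod_eq_zero (f := fun j => cyclicA lam (σ j) j) (mem_univ i)
      (cyclicA_apply_of_ne lam hi₀ hi₁), smul_zero]

lemma det_cyclicA {l : ℕ} [NeZero l] (lam : Fin l → R) : (cyclicA lam).det = 1 - ∏ t, lam t := by
  obtain ⟨n, rfl⟩ := Nat.exists_eq_succ_of_ne_zero (NeZero.ne l)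
  cases n with
  | zero => simp [det_unique, cyclicA]
  | succ n => exact det_cyclicA_fin_add_two lam

end Det

lemma Matrix.finrank_ker_mulVecLin_eq_zero_iff {n : Type*} [Fintype n] [DecidableEq n]
    {K : Type*} [Field K] (M : Matrix n n K) :
    Module.finrank K (LinearMap.ker M.mulVecLin) = 0 ↔ M.det ≠ 0 := by
  rw [Submodule.finrank_eq_zero, ker_mulVecLin_eq_bot_iff, Ne, ← exists_mulVec_eq_zero_iff]
  simp only [not_exists, not_and, not_imp_not]

section Kernel

variable {l : ℕ} [NeZero l] {K : Type*} [Field K] (lam : Fin l → K)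

lemma finrank_ker_cyclicA_le_one :
    Module.finrank K (LinearMap.ker (cyclicA lam).mulVecLin) ≤ 1 := by
  have hinj : Function.Injective
      ((LinearMap.proj 0).comp (LinearMap.ker (cyclicA lam).mulVecLin).subtype) := by
    rw [← LinearMap.ker_eq_bot, LinearMap.ker_eq_bot']
    rintro ⟨x, hx⟩ h₀
    rw [LinearMap.mem_ker, mulVecLin_apply, cyclicA_mulVec_eq_zero_iff] at hx
    exact Subtype.ext (Fin.eq_zero_of_apply_add_one_eq_mul hx h₀)
  simpa using LinearMap.finrank_le_finrank_of_injective hinj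

lemma finrank_ker_cyclicA_eq_one_iff :
    Module.finrank K (LinearMap.ker (cyclicA lam).mulVecLin) = 1 ↔ ∏ t, lam t = 1 := by
  have hle := finrank_ker_cyclicA_le_one lam
  calc Module.finrank K (LinearMap.ker (cyclicA lam).mulVecLin) = 1
      ↔ Module.finrank K (LinearMap.ker (cyclicA lam).mulVecLin) ≠ 0 := by omega
    _ ↔ (cyclicA lam).det = 0 := (cyclicA lam).finrank_ker_mulVecLin_eq_zero_iff.not_left
    _ ↔ ∏ t, lam t = 1 := by rw [det_cyclicA, sub_eq_zero, eq_comm]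

end Kernel

/-- `det A = 1 − λ_1 λ_2 ⋯ λ_l`; moreover over a field the corank of `A`
is `0` or `1`, and it is `1` if and only if `λ_1 λ_2 ⋯ λ_l = 1`. -/
theorem stmt15 {l : ℕ} (hl : 0 < l) :
    (∀ (R : Type) [CommRing R] (lam : Fin l → R),
      (cyclicA lam).det = 1 - ∏ t, lam t) ∧
    (∀ (K : Type) [Field K] (lam : Fin l → K),
      Module.finrank K (LinearMap.ker (cyclicA lam).mulVecLin) ≤ 1 ∧
      (Module.finrank K (LinearMap.ker (cyclicA lam).mulVecLin) = 1 ↔ ∏ t, lam t = 1)) := by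
  have : NeZero l := ⟨hl.ne'⟩
  exact ⟨fun R _ lam => det_cyclicA lam,
    fun K _ lam => ⟨finrank_ker_cyclicA_le_one lam, finrank_ker_cyclicA_eq_one_iff lam⟩⟩
end

section
/- Let q ∈ k^× be a non-root of unity in a field k of characteristic 0, let a > b be positive integers, and consider m = (m_1, m_2) ∈ N_0^2 with m_1, m_2 > 0. Then a·m_1^2 − b·m_1·m_2 + a·m_2^2 ≠ a·m_1 + a·m_2. Equivalently, the quadratic diophantine equation a m_1^2 − b m_1 m_2 + a m_2^2 = a(m_1 + m_2) has no solution with m_1, m_2 ≥ 1. -/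
/-- For integers `a > b ≥ 1` and `m_1, m_2 ≥ 1`, the quadratic diophantine
equation `a m_1² − b m_1 m_2 + a m_2² = a(m_1 + m_2)` has no solution; i.e.
`a m_1² − b m_1 m_2 + a m_2² ≠ a m_1 + a m_2`. -/
theorem stmt16 (a b m1 m2 : ℤ) (hb : 1 ≤ b) (hab : b < a)
    (h1 : 1 ≤ m1) (h2 : 1 ≤ m2) :
    a * m1 ^ 2 - b * m1 * m2 + a * m2 ^ 2 ≠ a * m1 + a * m2 := by
  intro h
  have ha : 0 < a := lt_trans (lt_of_lt_of_le zero_lt_one hb) hab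
  have hm12 : 0 < m1 * m2 := mul_pos (lt_of_lt_of_le zero_lt_one h1) (lt_of_lt_of_le zero_lt_one h2)
  have hlt : m1 ^ 2 + m2 ^ 2 - m1 - m2 < m1 * m2 := by
    have : a * (m1 ^ 2 + m2 ^ 2 - m1 - m2) < a * (m1 * m2) := by nlinarith
    exact lt_of_mul_lt_mul_left this (le_of_lt ha)
  have key : (m1 - 1) * (m2 - 1) = 0 := by
    nlinarith [sq_nonneg (m1 - m2), mul_nonneg (sub_nonneg.2 h1) (sub_nonneg.2 h2)]
  rcases mul_eq_zero.1 key with hk | hk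
  · have hm1 : m1 = 1 := by linarith
    subst hm1
    have hm2 : m2 * m2 < m2 * 2 := by nlinarith
    have : m2 < 2 := lt_of_mul_lt_mul_left hm2 (by linarith)
    have : m2 = 1 := by omega
    subst this; linarith [h]
  · have hm2 : m2 = 1 := by linarith
    subst hm2
    have hm1' : m1 * m1 < m1 * 2 := by nlinarith
    have : m1 < 2 := lt_of_mul_lt_mul_left hm1' (by linarith)
    have : m1 = 1 := by omega
    subst this; linarith [h]
end
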